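/- arXiv:1508.07965 — 4 statements merged into one kernel-verified Lean document; each statement's English description precedes it below -/
import Mathlib

section
/- Let k >= 1 and let p = (p_0,...,p_k) be a probability vector with all entries positive, and let p_max denote the second largest of p_0,...,p_k. Then the sum over j = 0,...,k-1 of 2 q_j^* log_2(4/q_j^*) (where q_j = p_0+...+p_j and q_j^* = min(q_j, 1-q_j)) is at most k(k+1) * p_max * log_2(4/p_max), and hence at most 3 k^2 p_max log(4/p_max) (natural logarithm). -/
/-!
Let `φ(x) = x log(4/x)`. On `(0, 1]` it is increasing (its derivative is `log(4/x) - 1 > 0`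
because `e < 4`) and subadditive. The cut after index `j` splits `p` into a prefix of mass `q_j`
and a suffix of mass `1 - q_j`; the side not containing the largest entry `p_s` has mass at least
`q_j^*` and has `j + 1` or `k - j` entries, each at most `p_max`. Hence
`φ(q_j^*) ≤ (j + 1) φ(p_max)` for `j < s` and `φ(q_j^*) ≤ (k - j) φ(p_max)` otherwise, and these
counts sum to `s(s+1)/2 + (k-s)(k-s+1)/2 ≤ k(k+1)/2`. The natural-log form follows from
`k(k+1) ≤ 2k²` and `log 2 > 2/3`.
-/

open Finset Real

lemma one_le_log_four_div {y : ℝ} (hy : 0 < y) (hy1 : y ≤ 1) : 1 ≤ log (4 / y) := by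
  rw [le_log_iff_exp_le (by positivity)]
  calc exp 1 ≤ 4 := by linarith [exp_one_lt_d9]
    _ ≤ 4 / y := by rw [le_div_iff₀ hy]; linarith

lemma mul_log_four_div_le_of_le {x y : ℝ} (hx : 0 < x) (hxy : x ≤ y) (hy1 : y ≤ 1) :
    x * log (4 / x) ≤ y * log (4 / y) := by
  have hy : 0 < y := hx.trans_le hxy
  have hratio : x * log (y / x) ≤ y - x := by
    have := mul_le_mul_of_nonneg_left (log_le_sub_one_of_pos (div_pos hy hx)) hx.le
    rwa [mul_sub, mul_div_cancel₀ _ hx.ne', mul_one] at this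
  have hsplit : log (4 / x) = log (4 / y) + log (y / x) := by
    rw [← log_mul (by positivity) (by positivity)]
    field_simp
  calc x * log (4 / x) = x * log (4 / y) + x * log (y / x) := by rw [hsplit, mul_add]
    _ ≤ x * log (4 / y) + (y - x) * log (4 / y) := by
      nlinarith [one_le_log_four_div hy hy1]
    _ = y * log (4 / y) := by ring

lemma mul_log_four_div_add_le {x y : ℝ} (hx : 0 < x) (hy : 0 < y) :
    (x + y) * log (4 / (x + y)) ≤ x * log (4 / x) + y * log (4 / y) := by
  rw [add_mul]
  gcongr <;> linarith

lemma sum_mul_log_four_div_le {ι : Type*} (T : Finset ι) {p : ι → ℝ} (hpos : ∀ i ∈ T, 0 < p i) :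
    (∑ i ∈ T, p i) * log (4 / ∑ i ∈ T, p i) ≤ ∑ i ∈ T, p i * log (4 / p i) :=
  le_sum_of_subadditive_on_pred (fun x : ℝ ↦ x * log (4 / x)) (0 < ·) (by simp)
    (fun _ _ ↦ mul_log_four_div_add_le) (fun _ _ ↦ add_pos) p hpos

lemma mul_log_four_div_le_card_mul {ι : Type*} {T : Finset ι} {p : ι → ℝ} {x m : ℝ}
    (hx : 0 < x) (hxT : x ≤ ∑ i ∈ T, p i) (hT : ∑ i ∈ T, p i ≤ 1)
    (hpos : ∀ i ∈ T, 0 < p i) (hub : ∀ i ∈ T, p i ≤ m) (hm : m ≤ 1) :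
    x * log (4 / x) ≤ #T * (m * log (4 / m)) :=
  calc x * log (4 / x) ≤ (∑ i ∈ T, p i) * log (4 / ∑ i ∈ T, p i) :=
        mul_log_four_div_le_of_le hx hxT hT
    _ ≤ ∑ i ∈ T, p i * log (4 / p i) := sum_mul_log_four_div_le T hpos
    _ ≤ ∑ _i ∈ T, m * log (4 / m) :=
        sum_le_sum fun i hi ↦ mul_log_four_div_le_of_le (hpos i hi) (hub i hi) hm
    _ = #T * (m * log (4 / m)) := by rw [sum_const, nsmul_eq_mul]

lemma card_filter_val_le {k j : ℕ} (hj : j ≤ k) : #{i : Fin (k + 1) | (i : ℕ) ≤ j} = j + 1 := by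
  simp_rw [Nat.le_iff_lt_add_one, Fin.card_filter_val_lt]
  omega

lemma card_filter_not_val_le {k j : ℕ} (hj : j ≤ k) :
    #{i : Fin (k + 1) | ¬ (i : ℕ) ≤ j} = k - j := by
  have := card_filter_add_card_filter_not (s := univ) (fun i : Fin (k + 1) ↦ (i : ℕ) ≤ j)
  rw [card_filter_val_le hj, card_univ, Fintype.card_fin] at this
  omega

/-- The number of indices in `{0, …, k}` on the side of the cut between `j` and `j + 1` that does
not contain `s`. -/
def cutCount (k s j : ℕ) : ℕ := if j < s then j + 1 else k - j

lemma two_mul_sum_range_add_one (n : ℕ) : 2 * ∑ i ∈ range n, (i + 1) = n * (n + 1) := by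
  induction n with
  | zero => simp
  | succ n ih => rw [sum_range_succ, mul_add, ih]; ring

lemma two_mul_sum_cutCount_le {k s : ℕ} (hs : s ≤ k) :
    2 * ∑ j ∈ range k, cutCount k s j ≤ k * (k + 1) := by
  obtain ⟨b, rfl⟩ := Nat.exists_eq_add_of_le hs
  have hleft : ∑ j ∈ range s, cutCount (s + b) s j = ∑ j ∈ range s, (j + 1) :=
    sum_congr rfl fun j hj ↦ if_pos (mem_range.mp hj)
  have hright : ∑ j ∈ Ico s (s + b), cutCount (s + b) s j = ∑ i ∈ range b, (i + 1) := by
    rw [sum_Ico_eq_sum_range, Nat.add_sub_cancel_left, ← sum_range_reflect]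
    refine sum_congr rfl fun i hi ↦ ?_
    have := mem_range.mp hi
    rw [cutCount, if_neg (by omega)]
    omega
  rw [← sum_range_add_sum_Ico _ (Nat.le_add_right s b), hleft, hright, mul_add,
    two_mul_sum_range_add_one, two_mul_sum_range_add_one]
  nlinarith

lemma min_mul_log_four_div_le {k : ℕ} {p : Fin (k + 1) → ℝ} (hpos : ∀ i, 0 < p i)
    (hsum : ∑ i, p i = 1) {s : Fin (k + 1)} {m : ℝ} (hub : ∀ i, i ≠ s → p i ≤ m) (hm : m ≤ 1)
    {j : ℕ} (hj : j < k) :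
    let q := ∑ i ∈ univ.filter (fun i : Fin (k + 1) ↦ (i : ℕ) ≤ j), p i
    min q (1 - q) * log (4 / min q (1 - q)) ≤ cutCount k s j * (m * log (4 / m)) := by
  intro q
  have hcompl : 1 - q = ∑ i ∈ univ.filter (fun i : Fin (k + 1) ↦ ¬ (i : ℕ) ≤ j), p i := by
    rw [← hsum, ← sum_filter_add_sum_filter_not univ (fun i : Fin (k + 1) ↦ (i : ℕ) ≤ j)]
    ring
  have hq : 0 < q := sum_pos (fun i _ ↦ hpos i) ⟨0, by simp⟩
  have hq' : 0 < 1 - q := hcompl ▸ sum_pos (fun i _ ↦ hpos i) ⟨Fin.last k, by simpa using hj⟩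
  have hmin : 0 < min q (1 - q) := lt_min hq hq'
  unfold cutCount
  split_ifs with hjs
  · rw [← card_filter_val_le hj.le]
    refine mul_log_four_div_le_card_mul hmin (min_le_left _ _) (by linarith) (fun i _ ↦ hpos i)
      (fun i hi ↦ hub i ?_) hm
    rintro rfl
    simp only [mem_filter, mem_univ, true_and] at hi
    omega
  · rw [← card_filter_not_val_le hj.le]
    refine mul_log_four_div_le_card_mul hmin (hcompl ▸ min_le_right _ _) (by linarith)
      (fun i _ ↦ hpos i) (fun i hi ↦ hub i ?_) hm
    rintro rfl
    simp only [mem_filter, mem_univ, true_and] at hi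
    omega

lemma mul_succ_div_log_two_le (k : ℕ) : k * (k + 1) / log 2 ≤ 3 * k ^ 2 := by
  have hlog2 : 2 / 3 < log 2 := by linarith [log_two_gt_d9]
  rw [div_le_iff₀ (by linarith)]
  have hk : (k : ℝ) ≤ k ^ 2 := by exact_mod_cast Nat.le_self_pow two_ne_zero k
  nlinarith

theorem sum_qstar_le_second_largest_general (k : ℕ) (p : Fin (k + 1) → ℝ)
    (hpos : ∀ i, 0 < p i) (hsum : ∑ i, p i = 1)
    (s : Fin (k + 1))
    (pmax : ℝ) (hub : ∀ i, i ≠ s → p i ≤ pmax) (hex : ∃ i, i ≠ s ∧ p i = pmax) :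
    let Q : ℕ → ℝ := fun j => ∑ i ∈ Finset.univ.filter (fun i : Fin (k + 1) => (i : ℕ) ≤ j), p i
    (∑ j ∈ Finset.range k,
        2 * min (Q j) (1 - Q j) * Real.logb 2 (4 / min (Q j) (1 - Q j))) ≤
      k * (k + 1) * pmax * Real.logb 2 (4 / pmax) ∧
    (∑ j ∈ Finset.range k,
        2 * min (Q j) (1 - Q j) * Real.logb 2 (4 / min (Q j) (1 - Q j))) ≤
      3 * k ^ 2 * pmax * Real.log (4 / pmax) := by
  intro Q
  obtain ⟨i₀, -, rfl⟩ := hex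
  have hm : p i₀ ≤ 1 := hsum ▸ single_le_sum (fun i _ ↦ (hpos i).le) (mem_univ i₀)
  have hA : 0 ≤ p i₀ * log (4 / p i₀) :=
    mul_nonneg (hpos i₀).le (zero_le_one.trans (one_le_log_four_div (hpos i₀) hm))
  have hlogb (x : ℝ) : 2 * x * logb 2 (4 / x) = 2 * (x * log (4 / x)) / log 2 := by
    rw [logb]; ring
  have hcuts : ∑ j ∈ range k, 2 * (min (Q j) (1 - Q j) * log (4 / min (Q j) (1 - Q j))) ≤
      k * (k + 1) * (p i₀ * log (4 / p i₀)) :=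
    calc _ ≤ ∑ j ∈ range k, 2 * (cutCount k s j * (p i₀ * log (4 / p i₀))) :=
          sum_le_sum fun j hj ↦ mul_le_mul_of_nonneg_left
            (min_mul_log_four_div_le hpos hsum hub hm (mem_range.mp hj)) zero_le_two
      _ = ((2 * ∑ j ∈ range k, cutCount k s j : ℕ) : ℝ) * (p i₀ * log (4 / p i₀)) := by
          push_cast; rw [mul_sum, sum_mul]; simp only [mul_assoc]
      _ ≤ k * (k + 1) * (p i₀ * log (4 / p i₀)) := by
          gcongr; exact_mod_cast two_mul_sum_cutCount_le (Nat.lt_succ_iff.mp s.isLt)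
  have hfirst : ∑ j ∈ range k, 2 * min (Q j) (1 - Q j) * logb 2 (4 / min (Q j) (1 - Q j)) ≤
      k * (k + 1) * p i₀ * logb 2 (4 / p i₀) := by
    simp only [hlogb, ← sum_div]
    rw [logb, ← mul_div_assoc, mul_assoc _ (p i₀)]
    exact div_le_div_of_nonneg_right hcuts (log_pos one_lt_two).le
  refine ⟨hfirst, hfirst.trans ?_⟩
  rw [logb, ← mul_div_assoc, mul_assoc _ (p i₀), mul_div_right_comm, mul_assoc _ (p i₀)]
  exact mul_le_mul_of_nonneg_right (mul_succ_div_log_two_le k) hA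

/-- For a probability vector `p` on `{0,…,k}` (`k ≥ 1`) with positive
entries, with `pmax` the second largest entry (`s` being an index achieving the
maximum), the sum over `j = 0,…,k-1` of `2 q_j^* log₂(4/q_j^*)` is at most
`k(k+1) pmax log₂(4/pmax)`, and hence at most `3 k² pmax log(4/pmax)`. -/
theorem sum_qstar_le_second_largest (k : ℕ) (hk : 1 ≤ k) (p : Fin (k + 1) → ℝ)
    (hpos : ∀ i, 0 < p i) (hsum : ∑ i, p i = 1)
    (s : Fin (k + 1)) (hs : ∀ i, p i ≤ p s)
    (pmax : ℝ) (hub : ∀ i, i ≠ s → p i ≤ pmax) (hex : ∃ i, i ≠ s ∧ p i = pmax) :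
    let Q : ℕ → ℝ := fun j => ∑ i ∈ Finset.univ.filter (fun i : Fin (k + 1) => (i : ℕ) ≤ j), p i
    (∑ j ∈ Finset.range k,
        2 * min (Q j) (1 - Q j) * Real.logb 2 (4 / min (Q j) (1 - Q j))) ≤
      k * (k + 1) * pmax * Real.logb 2 (4 / pmax) ∧
    (∑ j ∈ Finset.range k,
        2 * min (Q j) (1 - Q j) * Real.logb 2 (4 / min (Q j) (1 - Q j))) ≤
      3 * k ^ 2 * pmax * Real.log (4 / pmax) :=
  sum_qstar_le_second_largest_general k p hpos hsum s pmax hub hex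
end

section
/- For a uniform random variable U on (0,1), a threshold q in (0,1), and h_l the map inverting the l-th binary digit, the probability that U < q < h_l(U) is at most min(min(q,1-q), 2^{-l}). -/
open MeasureTheory

/-- The map inverting the `l`-th binary digit of `x ∈ [0,1)` (using the terminating
expansion where there is a choice). -/
noncomputable def flipDigit (l : ℕ) (x : ℝ) : ℝ :=
  if ⌊x * 2 ^ l⌋ % 2 = 0 then x + (2 : ℝ) ^ (-(l : ℤ)) else x - (2 : ℝ) ^ (-(l : ℤ))

/-- For `U` uniform on `(0,1)`, a threshold `q ∈ (0,1)` and `h_l` the map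
inverting the `l`-th binary digit, `P(U < q < h_l(U)) ≤ min(min(q, 1-q), 2^{-l})`. -/
theorem flipDigit_crossing_prob_le (l : ℕ) (hl : 1 ≤ l) (q : ℝ)
    (hq : q ∈ Set.Ioo (0 : ℝ) 1) :
    volume {x | x ∈ Set.Ioo (0 : ℝ) 1 ∧ x < q ∧ q < flipDigit l x} ≤
      ENNReal.ofReal (min (min q (1 - q)) ((2 : ℝ) ^ (-(l : ℤ)))) := by
  obtain ⟨hq0, hq1⟩ := hq
  set e : ℝ := (2 : ℝ) ^ (-(l : ℤ)) with he
  have he0 : 0 < e := by positivity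
  have h2e : (2 : ℝ) ^ l * e = 1 := by
    rw [he, ← zpow_natCast (2 : ℝ) l, ← zpow_add₀ (by norm_num : (2 : ℝ) ≠ 0)]
    simp
  have subset : {x | x ∈ Set.Ioo (0 : ℝ) 1 ∧ x < q ∧ q < flipDigit l x} ⊆
      Set.Ioo (max 0 (q - e)) (min q (1 - e)) := by
    rintro x ⟨⟨hx0, hx1⟩, hxq, hqf⟩
    unfold flipDigit at hqf
    split_ifs at hqf with hpar
    · refine ⟨max_lt hx0 (by linarith), lt_min hxq ?_⟩
      by_contra h
      push_neg at h
      have hfl : ⌊x * 2 ^ l⌋ = 2 ^ l - 1 := by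
        rw [Int.floor_eq_iff]
        constructor
        · push_cast
          nlinarith
        · push_cast
          nlinarith
      obtain ⟨m, rfl⟩ := Nat.exists_eq_add_of_le hl
      rw [hfl] at hpar
      have : (2 : ℤ) ^ (1 + m) = 2 * 2 ^ m := by ring
      omega
    · linarith
  calc volume {x | x ∈ Set.Ioo (0 : ℝ) 1 ∧ x < q ∧ q < flipDigit l x}
      ≤ volume (Set.Ioo (max 0 (q - e)) (min q (1 - e))) := measure_mono subset
    _ = ENNReal.ofReal (min q (1 - e) - max 0 (q - e)) := Real.volume_Ioo
    _ ≤ ENNReal.ofReal (min (min q (1 - q)) e) := by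
        apply ENNReal.ofReal_le_ofReal
        have h1 : min q (1 - e) ≤ q := min_le_left _ _
        have h2 : min q (1 - e) ≤ 1 - e := min_le_right _ _
        have h3 : (0 : ℝ) ≤ max 0 (q - e) := le_max_left _ _
        have h4 : q - e ≤ max 0 (q - e) := le_max_right _ _
        refine le_min (le_min (by linarith) (by linarith)) (by linarith)
end

section
/- Let k be a positive integer, p = (p_0,...,p_k) a probability vector with all p_i > 0, and f: {0,...,k} -> {0,1} any function. Define w_{l,p}(f) = P[ f(beta_p(U)) != f(beta_p(h_l(U))) ] where U is uniform on (0,1), beta_p is the quantile map into {0,...,k}, and h_l flips the l-th binary digit; and set w_p(f) = sum_{l=1}^infinity w_{l,p}(f). Then w_p(f) <= 3 k^2 p_max(p) log(4/p_max(p)), where p_max(p) is the second largest of p_0,...,p_k. -/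
/-! Write `c_j = p_0 + ⋯ + p_{j-1}`, so that `β_p = j` exactly on `[c_j, c_j + p_j)`. Flipping
digit `m` moves `x` by `±2^{-m}` and does not increase the Lebesgue measure of preimages. Hence the
`m`-th influence is at most `2 (1 - p_s) ≤ 2k·pmax`, since `x` or its flip lies outside
`[c_s, c_s + p_s)`, and at most `2k·2^{-m}`, since `x` lies within `2^{-m}` of one of the `k`
cut points `c_1, …, c_k`. Using the first bound for the first `L = ⌈log₂(1/pmax)⌉` digits and
the second for the rest gives `2 (L + 1) k·pmax ≤ 3k² pmax log(4/pmax)`. -/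

open MeasureTheory

open Set
open scoped ENNReal

section FlipDigit

variable (m : ℕ) (x : ℝ)

lemma flipDigit_eq_ite :
    flipDigit m x = if ⌊x * 2 ^ m⌋ % 2 = 0 then x + 2⁻¹ ^ m else x - 2⁻¹ ^ m := by
  simp only [flipDigit, zpow_neg, zpow_natCast, inv_pow]

lemma floor_add_inv_two_pow_mul : ⌊(x + 2⁻¹ ^ m) * 2 ^ m⌋ = ⌊x * 2 ^ m⌋ + 1 := by
  rw [add_mul, inv_pow, inv_mul_cancel₀ (by positivity)]
  exact Int.floor_add_one _

lemma abs_flipDigit_sub : |flipDigit m x - x| = 2⁻¹ ^ m := by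
  rw [flipDigit_eq_ite]
  split_ifs <;> simp [abs_of_pos]

lemma flipDigit_mem_Ico {m : ℕ} (hm : 0 < m) {x : ℝ} (hx : x ∈ Ico (0 : ℝ) 1) :
    flipDigit m x ∈ Ico (0 : ℝ) 1 := by
  have hc₀ : (0 : ℝ) < 2⁻¹ ^ m := by positivity
  have hc : (2⁻¹ : ℝ) ^ m * 2 ^ m = 1 := by rw [inv_pow, inv_mul_cancel₀ (by positivity)]
  set n := ⌊x * 2 ^ m⌋
  have hn₀ : 0 ≤ n := Int.floor_nonneg.mpr (by nlinarith [hx.1])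
  have hn₁ : n < 2 ^ m := Int.floor_lt.mpr (by push_cast; nlinarith [hx.2])
  have hle : (n : ℝ) ≤ x * 2 ^ m := Int.floor_le _
  have hlt : x * 2 ^ m < n + 1 := Int.lt_floor_add_one _
  have heven : (2 : ℤ) ∣ 2 ^ m := dvd_pow_self 2 hm.ne'
  rw [flipDigit_eq_ite]
  split_ifs with h
  · have : (n : ℝ) + 2 ≤ 2 ^ m := by exact_mod_cast (show n + 2 ≤ 2 ^ m by omega)
    exact ⟨by nlinarith [hx.1], by nlinarith⟩
  · have : (1 : ℝ) ≤ n := by exact_mod_cast (show 1 ≤ n by omega)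
    exact ⟨by nlinarith, by nlinarith [hx.2]⟩

/-- Flipping a digit is a translation by `±2⁻¹ ^ m` on each of the two sets where that digit is
`0` or `1`, and it swaps these two sets. -/
lemma volume_preimage_flipDigit_le (A : Set ℝ) : volume (flipDigit m ⁻¹' A) ≤ volume A := by
  set c : ℝ := 2⁻¹ ^ m
  set E : Set ℝ := {x | ⌊x * 2 ^ m⌋ % 2 = 0}
  have hE : MeasurableSet E := (Int.measurable_floor.comp (measurable_id.mul_const _))
    (MeasurableSet.of_discrete (s := {n : ℤ | n % 2 = 0}))
  have hcE : ∀ x, x + c ∈ E ↔ x ∉ E := fun x => by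
    simp only [E, mem_ofPred_eq, c, floor_add_inv_two_pow_mul]; omega
  have h₁ : flipDigit m ⁻¹' A ∩ E ⊆ (· + c) ⁻¹' (A \ E) := fun x ⟨hA, hx⟩ => by
    simp only [mem_preimage, flipDigit_eq_ite, if_pos (show ⌊x * 2 ^ m⌋ % 2 = 0 from hx)] at hA ⊢
    exact ⟨hA, fun h => (hcE x).1 h hx⟩
  have h₂ : flipDigit m ⁻¹' A \ E ⊆ (· + -c) ⁻¹' (A ∩ E) := fun x ⟨hA, hx⟩ => by
    simp only [mem_preimage, flipDigit_eq_ite, if_neg (show ¬⌊x * 2 ^ m⌋ % 2 = 0 from hx)] at hA ⊢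
    refine ⟨hA, not_not.1 fun h => ?_⟩
    exact hx (by simpa using (hcE (x + -c)).2 h)
  calc volume (flipDigit m ⁻¹' A)
      ≤ volume (flipDigit m ⁻¹' A ∩ E) + volume (flipDigit m ⁻¹' A \ E) :=
        measure_le_inter_add_sdiff _ _ _
    _ ≤ volume ((· + c) ⁻¹' (A \ E)) + volume ((· + -c) ⁻¹' (A ∩ E)) :=
        add_le_add (measure_mono h₁) (measure_mono h₂)
    _ = volume A := by
        rw [measure_preimage_add_right, measure_preimage_add_right, add_comm,
          measure_inter_add_sdiff _ hE]

end FlipDigit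

def flipDisagreement {α : Type*} (g : ℝ → α) (m : ℕ) : Set ℝ :=
  {x | x ∈ Ioo (0 : ℝ) 1 ∧ g x ≠ g (flipDigit m x)}

lemma flipDisagreement_comp_subset {α γ : Type*} (f : α → γ) (g : ℝ → α) (m : ℕ) :
    flipDisagreement (f ∘ g) m ⊆ flipDisagreement g m :=
  fun _ ⟨hx, hne⟩ => ⟨hx, fun h => hne (congrArg f h)⟩

lemma volume_flipDisagreement_le_two_mul {α : Type*} (g : ℝ → α) (a : α) {m : ℕ} (hm : 0 < m) :
    volume (flipDisagreement g m) ≤ 2 * volume (Ico (0 : ℝ) 1 \ g ⁻¹' {a}) := by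
  set A := Ico (0 : ℝ) 1 \ g ⁻¹' {a}
  have hsub : flipDisagreement g m ⊆ A ∪ flipDigit m ⁻¹' A := by
    rintro x ⟨hx, hne⟩
    have hx' : x ∈ Ico (0 : ℝ) 1 := Ioo_subset_Ico_self hx
    by_cases hgx : g x = a
    · exact Or.inr ⟨flipDigit_mem_Ico hm hx', fun h => hne (hgx.trans h.symm)⟩
    · exact Or.inl ⟨hx', hgx⟩
  calc volume (flipDisagreement g m) ≤ volume A + volume (flipDigit m ⁻¹' A) :=
        (measure_mono hsub).trans (measure_union_le _ _)
    _ ≤ volume A + volume A := add_le_add le_rfl (volume_preimage_flipDigit_le m A)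
    _ = 2 * volume A := (two_mul _).symm

section Quantile

open Finset

variable {ι : Type*} [Fintype ι] [LinearOrder ι] (p : ι → ℝ)

def cumSum (j : ι) : ℝ := ∑ i ∈ univ.filter (· < j), p i

def IsQuantileMap (β : ℝ → ι) : Prop :=
  ∀ x ∈ Ico (0 : ℝ) 1, cumSum p (β x) ≤ x ∧ ∀ j, cumSum p j ≤ x → j ≤ β x

variable {p}

lemma cumSum_nonneg (hp : ∀ i, 0 ≤ p i) (j : ι) : 0 ≤ cumSum p j :=
  sum_nonneg fun i _ => hp i

lemma cumSum_add_self_eq (j : ι) : cumSum p j + p j = ∑ i ∈ univ.filter (· ≤ j), p i := by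
  rw [cumSum, ← sum_filter_add_sum_filter_not (univ.filter (· ≤ j)) (· < j), filter_filter,
    filter_filter]
  congr 1
  · congr 1; ext i; simpa using fun h : i < j => h.le
  · rw [show univ.filter (fun i => i ≤ j ∧ ¬i < j) = {j} by ext i; simp [le_antisymm_iff, not_lt],
      sum_singleton]

lemma cumSum_add_self_le_sum (hp : ∀ i, 0 ≤ p i) (j : ι) : cumSum p j + p j ≤ ∑ i, p i := by
  rw [cumSum_add_self_eq]
  exact sum_le_sum_of_subset_of_nonneg (filter_subset _ _) fun i _ _ => hp i

lemma cumSum_add_self_le_of_lt (hp : ∀ i, 0 ≤ p i) {i j : ι} (hij : i < j) :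
    cumSum p i + p i ≤ cumSum p j := by
  rw [cumSum_add_self_eq]
  refine sum_le_sum_of_subset_of_nonneg (fun l hl => ?_) fun l _ _ => hp l
  simp only [mem_filter, Finset.mem_univ, true_and] at hl ⊢
  exact hl.trans_lt hij

variable {β : ℝ → ι}

lemma IsQuantileMap.lt_cumSum_of_lt (hβ : IsQuantileMap p β) {x : ℝ} (hx : x ∈ Ico (0 : ℝ) 1)
    {j : ι} (hj : β x < j) : x < cumSum p j :=
  lt_of_not_ge fun h => (hβ x hx).2 j h |>.not_gt hj

lemma IsQuantileMap.apply_eq (hβ : IsQuantileMap p β) (hp : ∀ i, 0 ≤ p i) {x : ℝ}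
    (hx : x ∈ Ico (0 : ℝ) 1) {j : ι} (hj : x ∈ Ico (cumSum p j) (cumSum p j + p j)) : β x = j := by
  refine le_antisymm (not_lt.1 fun hlt => ?_) ((hβ x hx).2 j hj.1)
  linarith [cumSum_add_self_le_of_lt hp hlt, (hβ x hx).1, hj.2]

lemma IsQuantileMap.volume_Ico_diff_preimage_le (hβ : IsQuantileMap p β) (hp : ∀ i, 0 ≤ p i)
    (hsum : ∑ i, p i = 1) (s : ι) :
    volume (Ico (0 : ℝ) 1 \ β ⁻¹' {s}) ≤ ENNReal.ofReal (1 - p s) := by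
  have h₀ := cumSum_nonneg hp s
  have h₁ := cumSum_add_self_le_sum hp s
  have hsub : Ico (0 : ℝ) 1 \ β ⁻¹' {s} ⊆ Ico 0 (cumSum p s) ∪ Ico (cumSum p s + p s) 1 := by
    rintro x ⟨hx, hxs⟩
    by_contra h
    simp only [Set.mem_union, Set.mem_Ico, not_or, not_and, not_lt] at h
    exact hxs (hβ.apply_eq hp hx ⟨h.1 hx.1, lt_of_not_ge fun h' => (h.2 h').not_gt hx.2⟩)
  calc volume (Ico (0 : ℝ) 1 \ β ⁻¹' {s})
      ≤ volume (Ico 0 (cumSum p s)) + volume (Ico (cumSum p s + p s) 1) :=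
        (measure_mono hsub).trans (measure_union_le _ _)
    _ = ENNReal.ofReal (1 - p s) := by
        rw [Real.volume_Ico, Real.volume_Ico, ← ENNReal.ofReal_add (by linarith) (by linarith)]
        congr 1; ring

/-- Two points of `[0, 1)` with different quantiles are separated by a cut point `cumSum p j`,
and `j ≠ ⊥` since `cumSum p ⊥` is not strictly above any point of `[0, 1)`. -/
lemma IsQuantileMap.exists_cumSum_near [OrderBot ι] (hβ : IsQuantileMap p β) {x y : ℝ}
    (hx : x ∈ Ico (0 : ℝ) 1) (hy : y ∈ Ico (0 : ℝ) 1) (hne : β x ≠ β y) :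
    ∃ j ≠ ⊥, |x - cumSum p j| ≤ |x - y| := by
  rcases hne.lt_or_gt with hlt | hlt
  · refine ⟨β y, (bot_le.trans_lt hlt).ne', ?_⟩
    have h₁ := hβ.lt_cumSum_of_lt hx hlt
    have h₂ := (hβ y hy).1
    rw [abs_of_neg (by linarith), abs_of_neg (by linarith)]
    linarith
  · refine ⟨β x, (bot_le.trans_lt hlt).ne', ?_⟩
    have h₁ := hβ.lt_cumSum_of_lt hy hlt
    have h₂ := (hβ x hx).1
    rw [abs_of_nonneg (by linarith), abs_of_pos (by linarith)]
    linarith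

lemma IsQuantileMap.volume_flipDisagreement_le [OrderBot ι] (hβ : IsQuantileMap p β) {m : ℕ}
    (hm : 0 < m) :
    volume (flipDisagreement β m) ≤ (Fintype.card ι - 1 : ℕ) * (2 * 2⁻¹ ^ m) := by
  have hsub : flipDisagreement β m ⊆
      ⋃ j ∈ univ.erase (⊥ : ι), Metric.closedBall (cumSum p j) (2⁻¹ ^ m) := by
    rintro x ⟨hx, hne⟩
    have hx' : x ∈ Ico (0 : ℝ) 1 := Ioo_subset_Ico_self hx
    obtain ⟨j, hj, hjx⟩ := hβ.exists_cumSum_near hx' (flipDigit_mem_Ico hm hx') hne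
    refine mem_biUnion (mem_erase.2 ⟨hj, mem_univ j⟩) ?_
    rw [Metric.mem_closedBall, Real.dist_eq, ← abs_flipDigit_sub m x, abs_sub_comm _ x]
    exact hjx
  calc volume (flipDisagreement β m)
      ≤ ∑ j ∈ univ.erase (⊥ : ι), volume (Metric.closedBall (cumSum p j) ((2⁻¹ : ℝ) ^ m)) :=
        (measure_mono hsub).trans (measure_biUnion_finset_le _ _)
    _ = (Fintype.card ι - 1 : ℕ) * (2 * 2⁻¹ ^ m) := by
        simp only [Real.volume_closedBall, sum_const, card_erase_of_mem (mem_univ _), card_univ,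
          nsmul_eq_mul]
        rw [ENNReal.ofReal_mul zero_le_two, ENNReal.ofReal_pow (by norm_num),
          ENNReal.ofReal_inv_of_pos two_pos]
        simp

end Quantile

lemma ENNReal.tsum_le_of_le_of_le_geometric {a : ℕ → ℝ≥0∞} {B D : ℝ≥0∞} (L : ℕ)
    (hB : ∀ l, a l ≤ B) (hD : ∀ l, a l ≤ D * 2⁻¹ ^ l) :
    ∑' l, a l ≤ L * B + 2 * D * 2⁻¹ ^ L := calc
  ∑' l, a l = ∑ l ∈ Finset.range L, a l + ∑' l, a (l + L) :=
    (ENNReal.summable.sum_add_tsum_nat_add' (k := L)).symm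
  _ ≤ ∑ _l ∈ Finset.range L, B + ∑' l, D * 2⁻¹ ^ L * 2⁻¹ ^ l :=
    add_le_add (Finset.sum_le_sum fun l _ => hB l)
      (ENNReal.tsum_le_tsum fun l => (hD _).trans_eq (by rw [pow_add]; ring))
  _ = L * B + 2 * D * 2⁻¹ ^ L := by
    rw [Finset.sum_const, Finset.card_range, nsmul_eq_mul, ENNReal.tsum_mul_left,
      ENNReal.tsum_geometric, ENNReal.one_sub_inv_two, inv_inv]
    ring

/-- The choice `L = ⌈log₂ q⁻¹⌉`; the constant `3` absorbs `2 / log 2 < 3` and `4 < 6 log 2`. -/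
lemma exists_inv_two_pow_le_and_log_bound {q : ℝ} (hq₀ : 0 < q) (hq₁ : q ≤ 1) :
    ∃ L : ℕ, (2⁻¹ : ℝ) ^ L ≤ q ∧ 2 * ((L : ℝ) + 1) ≤ 3 * Real.log (4 / q) := by
  have hlog2 := Real.log_two_gt_d9
  set u := Real.log q⁻¹ / Real.log 2
  have hu : 0 ≤ u := div_nonneg (Real.log_nonneg (one_le_inv₀ hq₀ |>.2 hq₁)) (by linarith)
  have hlogq : Real.log q = -(u * Real.log 2) := by
    rw [div_mul_cancel₀ _ (by linarith), Real.log_inv, neg_neg]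
  refine ⟨⌈u⌉₊, ?_, ?_⟩
  · rw [← Real.log_le_log_iff (by positivity) hq₀, Real.log_pow, Real.log_inv, hlogq]
    nlinarith [Nat.le_ceil u]
  · rw [Real.log_div (by norm_num) hq₀.ne', hlogq, show (4 : ℝ) = 2 ^ 2 by norm_num,
      Real.log_pow]
    push_cast
    nlinarith [Nat.ceil_lt_add_one hu, mul_le_mul_of_nonneg_left hlog2.le hu]

lemma exists_nat_mul_add_inv_two_pow_le (k : ℕ) {q : ℝ} (hq₀ : 0 < q) (hq₁ : q ≤ 1) :
    ∃ L : ℕ, (L : ℝ≥0∞) * ENNReal.ofReal (2 * k * q) + 2 * k * 2⁻¹ ^ L ≤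
      ENNReal.ofReal (3 * k ^ 2 * q * Real.log (4 / q)) := by
  obtain ⟨L, hL, hLlog⟩ := exists_inv_two_pow_le_and_log_bound hq₀ hq₁
  refine ⟨L, ?_⟩
  have hkq : 0 ≤ (k : ℝ) * q := by positivity
  have hk : (k : ℝ) ≤ k ^ 2 := by exact_mod_cast Nat.le_self_pow two_ne_zero k
  have hconv : (L : ℝ≥0∞) * ENNReal.ofReal (2 * k * q) + 2 * k * 2⁻¹ ^ L =
      ENNReal.ofReal (L * (2 * k * q) + 2 * k * 2⁻¹ ^ L) := by
    rw [ENNReal.ofReal_add (by positivity) (by positivity)]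
    simp [ENNReal.ofReal_mul, ENNReal.ofReal_pow, ENNReal.ofReal_inv_of_pos, ENNReal.inv_pow]
  rw [hconv]
  refine ENNReal.ofReal_le_ofReal ?_
  calc L * (2 * k * q) + 2 * k * 2⁻¹ ^ L ≤ 2 * (L + 1) * (k * q) := by
        nlinarith [mul_le_mul_of_nonneg_left hL (by positivity : (0 : ℝ) ≤ 2 * k)]
    _ ≤ 3 * Real.log (4 / q) * (k * q) := mul_le_mul_of_nonneg_right hLlog hkq
    _ ≤ 3 * k ^ 2 * q * Real.log (4 / q) := by
        nlinarith [mul_le_mul_of_nonneg_right hk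
          (by nlinarith : 0 ≤ 3 * q * Real.log (4 / q))]

theorem sum_digit_influence_le_general (k : ℕ)
    (p : Fin (k + 1) → ℝ) (hpos : ∀ i, 0 < p i) (hsum : ∑ i, p i = 1)
    (β : ℝ → Fin (k + 1))
    (hβ : ∀ x ∈ Set.Ico (0 : ℝ) 1,
      (∑ i ∈ Finset.univ.filter (· < β x), p i) ≤ x ∧
      ∀ j : Fin (k + 1), (∑ i ∈ Finset.univ.filter (· < j), p i) ≤ x → j ≤ β x)
    (s : Fin (k + 1))
    (pmax : ℝ) (hub : ∀ i, i ≠ s → p i ≤ pmax) (hex : ∃ i, i ≠ s ∧ p i = pmax)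
    (f : Fin (k + 1) → Bool) :
    (∑' l : ℕ, volume {x | x ∈ Set.Ioo (0 : ℝ) 1 ∧ f (β x) ≠ f (β (flipDigit (l + 1) x))}) ≤
      ENNReal.ofReal (3 * k ^ 2 * pmax * Real.log (4 / pmax)) := by
  obtain ⟨i, -, rfl⟩ := hex
  have hp : ∀ j, 0 ≤ p j := fun j => (hpos j).le
  have hβ' : IsQuantileMap p β := hβ
  have hpi : p i ≤ 1 := hsum ▸ Finset.single_le_sum (fun j _ => hp j) (Finset.mem_univ i)
  have hcompl : 1 - p s ≤ k * p i := by
    rw [← hsum, ← Finset.sum_erase_eq_sub (Finset.mem_univ s)]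
    calc ∑ j ∈ Finset.univ.erase s, p j ≤ ∑ _j ∈ Finset.univ.erase s, p i :=
          Finset.sum_le_sum fun j hj => hub j (Finset.ne_of_mem_erase hj)
      _ = k * p i := by simp
  have hB (l : ℕ) : volume (flipDisagreement (f ∘ β) (l + 1)) ≤ ENNReal.ofReal (2 * k * p i) :=
    calc volume (flipDisagreement (f ∘ β) (l + 1))
        ≤ 2 * volume (Ico (0 : ℝ) 1 \ β ⁻¹' {s}) :=
          (measure_mono (flipDisagreement_comp_subset f β _)).trans
            (volume_flipDisagreement_le_two_mul β s l.succ_pos)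
      _ ≤ 2 * ENNReal.ofReal (1 - p s) := by
          gcongr; exact hβ'.volume_Ico_diff_preimage_le hp hsum s
      _ ≤ ENNReal.ofReal (2 * k * p i) := by
          rw [mul_assoc, ENNReal.ofReal_mul zero_le_two, ENNReal.ofReal_ofNat]
          gcongr
  have hD (l : ℕ) : volume (flipDisagreement (f ∘ β) (l + 1)) ≤ k * 2⁻¹ ^ l :=
    calc volume (flipDisagreement (f ∘ β) (l + 1))
        ≤ (Fintype.card (Fin (k + 1)) - 1 : ℕ) * (2 * 2⁻¹ ^ (l + 1)) :=
          (measure_mono (flipDisagreement_comp_subset f β _)).trans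
            (hβ'.volume_flipDisagreement_le l.succ_pos)
      _ = k * 2⁻¹ ^ l := by
          rw [Fintype.card_fin, Nat.add_sub_cancel, pow_succ', ← mul_assoc 2,
            ENNReal.mul_inv_cancel two_ne_zero ENNReal.ofNat_ne_top, one_mul]
  obtain ⟨L, hL⟩ := exists_nat_mul_add_inv_two_pow_le k (hpos i) hpi
  exact (ENNReal.tsum_le_of_le_of_le_geometric L hB hD).trans hL

/-- Lemma `KeyBoundUnlim`: For a probability vector `p` on `{0,…,k}`
with positive entries and any `f : {0,…,k} → {0,1}`, with
`w_{l,p}(f) = P[f(β_p(U)) ≠ f(β_p(h_l(U)))]` (`U` uniform on `(0,1)`, `β_p` the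
quantile map, `h_l` the `l`-th-binary-digit flip),
`∑_{l=1}^∞ w_{l,p}(f) ≤ 3 k² pmax log(4/pmax)`, where `pmax` is the second largest
entry of `p`. -/
theorem sum_digit_influence_le (k : ℕ) (hk : 0 < k)
    (p : Fin (k + 1) → ℝ) (hpos : ∀ i, 0 < p i) (hsum : ∑ i, p i = 1)
    (β : ℝ → Fin (k + 1))
    (hβ : ∀ x ∈ Set.Ico (0 : ℝ) 1,
      (∑ i ∈ Finset.univ.filter (· < β x), p i) ≤ x ∧
      ∀ j : Fin (k + 1), (∑ i ∈ Finset.univ.filter (· < j), p i) ≤ x → j ≤ β x)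
    (s : Fin (k + 1)) (hs : ∀ i, p i ≤ p s)
    (pmax : ℝ) (hub : ∀ i, i ≠ s → p i ≤ pmax) (hex : ∃ i, i ≠ s ∧ p i = pmax)
    (f : Fin (k + 1) → Bool) :
    (∑' l : ℕ, volume {x | x ∈ Set.Ioo (0 : ℝ) 1 ∧ f (β x) ≠ f (β (flipDigit (l + 1) x))}) ≤
      ENNReal.ofReal (3 * k ^ 2 * pmax * Real.log (4 / pmax)) :=
  sum_digit_influence_le_general k p hpos hsum β hβ s pmax hub hex f
end

section
/- Let X, X' be coupled random vectors in {0,...,k}^n where X has distribution prod_i P_{r_i} and X' has distribution which differs only in the j-th coordinate, such that P[X = X'] = 1 - epsilon and on the event X != X' we have X_j = 0, X'_j = k, and X_i = X'_i for all i != j. Then for any monotone-decreasing-in-coordinate-j function f: {0,...,k}^n -> {0,1} (meaning f(X') <= f(X) under the coupling as described), P[f(X') != f(X)] = epsilon * I_j, where I_j is the probability that coordinate j of X is pivotal for f given X_j = 0 can be changed to k; consequently the partial derivative of the crossing probability with respect to the j-th parameter equals the influence (Margulis–Russo formula for multi-valued product spaces). -/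
open scoped Classical

/-!
By the product rule, the derivative is a sum over coordinates `j` of
`∑ x ∈ E, (∏ i ≠ j, r (x i)) * (δ_⊤ - δ_⊥) (x j)`. Summing along each line `v ↦ update x j v`,
this telescopes to `w * (𝟙[update x j ⊤ ∈ E] - 𝟙[update x j ⊥ ∈ E])`, where `w` is the weight of
the other coordinates. Since `E` is increasing, this is `w` exactly when `j` is pivotal on the line,
which is also the pivotal mass of the line because `∑ v, r v = 1`.
-/

open Finset Function

section

variable {ι α : Type*} [DecidableEq ι]

theorem sum_eq_sum_filter_apply_eq_sum_update [Fintype ι] [Fintype α] [DecidableEq α]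
    {M : Type*} [AddCommMonoid M] (j : ι) (a : α)
    (F : (ι → α) → M) : ∑ x, F x = ∑ x with x j = a, ∑ v, F (update x j v) := by
  rw [Finset.sum_comm, ← Finset.sum_fiberwise univ (fun x => x j) F]
  refine sum_congr rfl fun v _ => ?_
  apply Finset.sum_nbij' (fun x => update x j a) (fun x => update x j v)
    <;> simp +contextual
  rintro x rfl
  rw [update_eq_self]

def IsPivotal (E : Finset (ι → α)) (j : ι) (x : ι → α) : Prop :=
  ∃ y : ι → α, (∀ i, i ≠ j → y i = x i) ∧ ((y ∈ E) ≠ (x ∈ E))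

theorem update_bot_le_and_le_update_top [Preorder α] [BoundedOrder α] {j : ι} {x y : ι → α}
    (hyx : ∀ i, i ≠ j → y i = x i) : update x j ⊥ ≤ y ∧ y ≤ update x j ⊤ := by
  simp +contextual [update_le_iff, le_update_iff, hyx]

theorem IsUpperSet.isPivotal_iff [Preorder α] [BoundedOrder α] {E : Finset (ι → α)}
    (hE : IsUpperSet (E : Set (ι → α))) {j : ι} {x : ι → α} :
    IsPivotal E j x ↔ update x j ⊤ ∈ E ∧ update x j ⊥ ∉ E := by
  obtain ⟨hx_bot, hx_top⟩ := update_bot_le_and_le_update_top (j := j) (x := x) fun _ _ => rfl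
  constructor
  · rintro ⟨y, hyx, hne⟩
    obtain ⟨hy_bot, hy_top⟩ := update_bot_le_and_le_update_top hyx
    by_cases hy : y ∈ E
    · have hx : x ∉ E := fun hx => hne (propext (iff_of_true hy hx))
      exact ⟨hE hy_top hy, fun h => hx (hE hx_bot h)⟩
    · have hx : x ∈ E := by_contra fun hx => hne (propext (iff_of_false hy hx))
      exact ⟨hE hx_top hx, fun h => hy (hE hy_bot h)⟩
  · rintro ⟨htop, hbot⟩
    by_cases hx : x ∈ E
    · exact ⟨update x j ⊥, fun i hi => update_of_ne hi _ _, by simp [hx, hbot]⟩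
    · exact ⟨update x j ⊤, fun i hi => update_of_ne hi _ _, by simp [hx, htop]⟩

theorem sum_mem_prod_erase_mul_eq_sum_isPivotal [Fintype ι] [Fintype α] [DecidableEq α]
    [Preorder α] [BoundedOrder α] {R : Type*} [CommRing R]
    {E : Finset (ι → α)} (hE : IsUpperSet (E : Set (ι → α))) {q : α → R} (hq : ∑ v, q v = 1)
    (j : ι) :
    ∑ x ∈ E, (∏ i ∈ univ.erase j, q (x i)) * (Pi.single ⊤ 1 - Pi.single ⊥ 1 : α → R) (x j) =
      ∑ x, if IsPivotal E j x then ∏ i, q (x i) else 0 := by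
  have hw : ∀ (x : ι → α) v, ∏ i ∈ univ.erase j, q (update x j v i) = ∏ i ∈ univ.erase j, q (x i) :=
    fun x v => prod_congr rfl fun i hi => by rw [update_of_ne (ne_of_mem_erase hi)]
  have hprod : ∀ x : ι → α, ∏ i, q (x i) = q (x j) * ∏ i ∈ univ.erase j, q (x i) := fun x =>
    (mul_prod_erase univ (fun i => q (x i)) (mem_univ j)).symm
  rw [← Fintype.sum_extend_by_zero, sum_eq_sum_filter_apply_eq_sum_update j ⊥,
    sum_eq_sum_filter_apply_eq_sum_update j ⊥]
  have hdiff : ∀ f : α → R, ∑ v, f v * (Pi.single ⊤ 1 - Pi.single ⊥ 1 : α → R) v = f ⊤ - f ⊥ :=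
    fun f => by simp [mul_sub, sum_sub_distrib, Pi.single_apply]
  refine sum_congr rfl fun x _ => ?_
  simp only [hw, hprod, update_self, hE.isPivotal_iff, update_idem, ← ite_zero_mul, hdiff]
  rw [← sum_mul, sum_ite_irrel, hq, sum_const_zero]
  have hmono : update x j ⊥ ∈ E → update x j ⊤ ∈ E := hE (update_mono bot_le)
  by_cases htop : update x j ⊤ ∈ E <;> by_cases hbot : update x j ⊥ ∈ E <;> simp_all

theorem hasDerivAt_sum_prod {𝕜 : Type*} [NontriviallyNormedField 𝕜] [Fintype ι]
    (E : Finset (ι → α)) {r : 𝕜 → α → 𝕜} {d : α → 𝕜} {h₀ : 𝕜}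
    (hr : ∀ v, HasDerivAt (fun h => r h v) (d v) h₀) :
    HasDerivAt (fun h => ∑ x ∈ E, ∏ i, r h (x i))
      (∑ x ∈ E, ∑ j, (∏ i ∈ univ.erase j, r h₀ (x i)) * d (x j)) h₀ :=
  HasDerivAt.fun_sum fun x _ => by simpa using HasDerivAt.fun_finsetProd fun i _ => hr (x i)

end

theorem margulis_russo_multivalued_general (k n : ℕ) (hk : 0 < k)
    (p : Fin (k + 1) → ℝ) (hsum : ∑ i, p i = 1)
    (E : Finset (Fin n → Fin (k + 1)))
    (hinc : ∀ x ∈ E, ∀ y : Fin n → Fin (k + 1), (∀ i, x i ≤ y i) → y ∈ E)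
    (h₀ : ℝ) :
    let r : ℝ → Fin (k + 1) → ℝ := fun h i =>
      if i = 0 then p i - h else if i = Fin.last k then p i + h else p i
    HasDerivAt (fun h => ∑ x ∈ E, ∏ i, r h (x i))
      (∑ j : Fin n, ∑ x : Fin n → Fin (k + 1),
        if (∃ y : Fin n → Fin (k + 1), (∀ i, i ≠ j → y i = x i) ∧ ((y ∈ E) ≠ (x ∈ E)))
        then ∏ i, r h₀ (x i) else 0) h₀ := by
  intro r
  set d : Fin (k + 1) → ℝ := Pi.single ⊤ 1 - Pi.single ⊥ 1
  have hlast : Fin.last k ≠ 0 := Fin.ext_iff.not.mpr hk.ne'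
  have hr : ∀ h v, r h v = p v + h * d v := fun h v => by
    rcases eq_or_ne v 0 with rfl | h0
    · simp [r, d, Fin.top_eq_last, bot_eq_zero, hlast, sub_eq_add_neg]
    rcases eq_or_ne v (Fin.last k) with rfl | hl
    · simp [r, d, Fin.top_eq_last, bot_eq_zero, hlast]
    · simp [r, d, Fin.top_eq_last, bot_eq_zero, h0, hl]
  have hderiv : ∀ v, HasDerivAt (fun h => r h v) (d v) h₀ := fun v => by
    simpa [hr] using ((hasDerivAt_id h₀).mul_const (d v)).const_add (p v)
  have hq : ∑ v, r h₀ v = 1 := by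
    simp [hr, sum_add_distrib, ← mul_sum, hsum, d, sum_sub_distrib]
  have hE : IsUpperSet (E : Set (Fin n → Fin (k + 1))) := fun x y hxy hx => hinc x hx y hxy
  refine (hasDerivAt_sum_prod E hderiv).congr_deriv ?_
  rw [sum_comm]
  exact sum_congr rfl fun j _ => (sum_mem_prod_erase_mul_eq_sum_isPivotal hE hq j).trans
    (sum_congr rfl fun x _ => if_congr Iff.rfl rfl rfl)

/-- Margulis–Russo formula for multi-valued product spaces:
for the one-parameter family of product measures `r(h) = p + h(-1, 0, …, 0, 1)` on
`{0,…,k}` and an increasing event `E ⊆ {0,…,k}ⁿ` with indicator `f`, the derivative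
`d/dh P_{r(h)}^n(E)` at `h₀` equals the total influence `∑_j I_{f,r(h₀)}(j)`, where
`I_{f,r(h₀)}(j)` is the probability that coordinate `j` is pivotal for `f`. -/
theorem margulis_russo_multivalued (k n : ℕ) (hk : 0 < k)
    (p : Fin (k + 1) → ℝ) (hp : ∀ i, 0 ≤ p i) (hsum : ∑ i, p i = 1)
    (E : Finset (Fin n → Fin (k + 1)))
    (hinc : ∀ x ∈ E, ∀ y : Fin n → Fin (k + 1), (∀ i, x i ≤ y i) → y ∈ E)
    (h₀ : ℝ) (hh0 : 0 ≤ h₀) (hh1 : h₀ ≤ p 0) (hh2 : p (Fin.last k) + h₀ ≤ 1) :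
    let r : ℝ → Fin (k + 1) → ℝ := fun h i =>
      if i = 0 then p i - h else if i = Fin.last k then p i + h else p i
    HasDerivAt (fun h => ∑ x ∈ E, ∏ i, r h (x i))
      (∑ j : Fin n, ∑ x : Fin n → Fin (k + 1),
        if (∃ y : Fin n → Fin (k + 1), (∀ i, i ≠ j → y i = x i) ∧ ((y ∈ E) ≠ (x ∈ E)))
        then ∏ i, r h₀ (x i) else 0) h₀ :=
  margulis_russo_multivalued_general k n hk p hsum E hinc h₀
end
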